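/- For any two distinct intervals I, J in the family 𝒥_p (p ≥ 2), the ratio D(I,J)/d(I,J) of the maximal to minimal distance between points of I and J is at most 40. -/

import Mathlib

open Real

/-- `ε_{p,l} = 0.1` if `2 ≤ p ≤ 4`, and
`ε_{p,l} = min{0.1, (l+0.1)/(3.92p), (p−l+0.1)/(3.92p)}` if `p ≥ 5`. -/
noncomputable def eps (p l : ℕ) : ℝ :=
  if p ≤ 4 then 0.1
  else min 0.1 (min (((l : ℝ) + 0.1) / (3.92 * p)) (((p : ℝ) - (l : ℝ) + 0.1) / (3.92 * p)))

lemma eps_le (p l : ℕ) : eps p l ≤ 0.1 := by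
  unfold eps; split
  · exact le_refl _
  · exact min_le_left _ _

lemma eps_nonneg (p l : ℕ) (hl : l < p) : 0 ≤ eps p l := by
  unfold eps; split
  · norm_num
  · rename_i hp4
    have hp0 : 0 < p := by omega
    have hp : (0:ℝ) < p := by exact_mod_cast hp0
    have hlp : (l:ℝ) ≤ (p:ℝ) := by exact_mod_cast hl.le
    refine le_min (by norm_num) (le_min (div_nonneg (by positivity) (by nlinarith)) (div_nonneg (by linarith) (by nlinarith)))

lemma eps_le_left (p l : ℕ) (hp : ¬ p ≤ 4) : eps p l ≤ ((l:ℝ) + 0.1) / (3.92 * p) := by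
  unfold eps; rw [if_neg hp]; exact (min_le_right _ _).trans (min_le_left _ _)

lemma eps_le_right (p l : ℕ) (hp : ¬ p ≤ 4) : eps p l ≤ ((p:ℝ) - (l:ℝ) + 0.1) / (3.92 * p) := by
  unfold eps; rw [if_neg hp]; exact (min_le_right _ _).trans (min_le_right _ _)

lemma sin_lower {x h : ℝ} (hh : 0 < h) (hx : h ≤ x) (hx' : x ≤ π - h) : 2 / π * h ≤ sin x := by
  have hpi : 0 < π := pi_pos
  rcases le_or_gt x (π/2) with hc | hc
  · calc 2/π*h ≤ 2/π*x := by
          have : (0:ℝ) < 2/π := by positivity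
          nlinarith
    _ ≤ sin x := mul_le_sin (by linarith) hc
  · have h1 : sin x = sin (π - x) := (Real.sin_pi_sub x).symm
    rw [h1]
    calc 2/π*h ≤ 2/π*(π - x) := by
          have : (0:ℝ) < 2/π := by positivity
          nlinarith
    _ ≤ sin (π - x) := mul_le_sin (by linarith) (by linarith)

lemma sin_lip (a b : ℝ) : sin a ≤ sin b + |a - b| := by
  have h := Real.sin_sub_sin a b
  have h1 : |sin ((a-b)/2)| ≤ |(a-b)/2| := abs_sin_le_abs
  have h2 : |cos ((a+b)/2)| ≤ 1 := abs_cos_le_one _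
  have h3 : sin a - sin b ≤ 2 * |(a-b)/2| * 1 := by
    rw [h]
    calc 2 * sin ((a-b)/2) * cos ((a+b)/2) ≤ |2 * sin ((a-b)/2) * cos ((a+b)/2)| := le_abs_self _
    _ = 2 * |sin ((a-b)/2)| * |cos ((a+b)/2)| := by rw [abs_mul, abs_mul]; norm_num
    _ ≤ 2 * |(a-b)/2| * 1 := by
        apply mul_le_mul _ h2 (abs_nonneg _) (by positivity)
        nlinarith
  have h4 : 2 * |(a-b)/2| = |a - b| := by
    rw [abs_div]; rw [abs_of_nonneg (by norm_num : (0:ℝ) ≤ 2)]; ring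
  linarith [h3, h4.le]

lemma core {M1 G1 M2 G2 h : ℝ} (hh : 0 < h) (hG2pos : 0 < G2) (hG1le : G1 ≤ 7 * G2)
    (hG2G1 : G2 ≤ G1) (hG1half : G1 ≤ π / 2)
    (hM2a : h ≤ M2) (hM2b : M2 ≤ π - h) (hM1a : 0 ≤ M1) (hM1b : M1 ≤ π)
    (hmd : |M1 - M2| ≤ h / 6) :
    4 * sin M1 * sin G1 ≤ 40 * (4 * sin M2 * sin G2) := by
  have hpi : 0 < π := pi_pos
  have hG2half : G2 ≤ π / 2 := le_trans hG2G1 hG1half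
  have hsinG1 : sin G1 ≤ 7 * (π / 2) * sin G2 := by
    have e1 : sin G1 ≤ G1 := Real.sin_le (by linarith)
    have e2 : 2 / π * G2 ≤ sin G2 := mul_le_sin hG2pos.le hG2half
    have e3 : 7 * (π / 2) * (2 / π * G2) = 7 * G2 := by field_simp
    nlinarith [pi_pos]
  have hsinM2 : 2 / π * h ≤ sin M2 := sin_lower hh hM2a hM2b
  have hsinM1 : sin M1 ≤ (1 + π / 12) * sin M2 := by
    have e1 : sin M1 ≤ sin M2 + |M1 - M2| := sin_lip M1 M2
    have e2 : π / 2 * (2 / π * h) = h := by field_simp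
    nlinarith [hsinM2, pi_pos]
  have hsinM2nn : 0 ≤ sin M2 := by
    apply Real.sin_nonneg_of_nonneg_of_le_pi <;> linarith
  have hsinG2nn : 0 ≤ sin G2 := by
    apply Real.sin_nonneg_of_nonneg_of_le_pi <;> linarith
  have hsinM1nn : 0 ≤ sin M1 := Real.sin_nonneg_of_nonneg_of_le_pi hM1a hM1b
  have hsinG1nn : 0 ≤ sin G1 := by
    apply Real.sin_nonneg_of_nonneg_of_le_pi <;> linarith
  have hpi315 : π < 3.15 := pi_lt_d2
  have hstep : sin M1 * sin G1 ≤ ((1 + π / 12) * sin M2) * (7 * (π / 2) * sin G2) := by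
    apply mul_le_mul hsinM1 hsinG1 hsinG1nn
    positivity
  have hprodnn : 0 ≤ sin M2 * sin G2 := mul_nonneg hsinM2nn hsinG2nn
  have hprod : ((1 + π / 12) * sin M2) * (7 * (π / 2) * sin G2)
      = ((1 + π / 12) * (7 * (π / 2))) * (sin M2 * sin G2) := by ring
  have c14 : (1 + π / 12) * (7 * (π / 2)) ≤ 14 := by nlinarith [pi_pos]
  have h14 : ((1 + π / 12) * (7 * (π / 2))) * (sin M2 * sin G2) ≤ 14 * (sin M2 * sin G2) :=
    mul_le_mul_of_nonneg_right c14 hprodnn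
  nlinarith [hstep, hprod, h14, hprodnn]

lemma key {h α1 β1 α2 β2 : ℝ} (hh : 0 < h)
    (h1 : h ≤ α1) (h3 : β1 < α2) (h5 : β2 ≤ π - h)
    (hgap : β2 - α1 ≤ 7 * (α2 - β1)) (hmid : |(α1 + β2) - (β1 + α2)| ≤ h / 3)
    {θ1 θ2 θ1' θ2' : ℝ}
    (ht1 : θ1 ∈ Set.Icc α1 β1) (ht2 : θ2 ∈ Set.Icc α2 β2)
    (ht1' : θ1' ∈ Set.Icc α1 β1) (ht2' : θ2' ∈ Set.Icc α2 β2) :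
    |2 * cos θ1 - 2 * cos θ2| ≤ 40 * |2 * cos θ1' - 2 * cos θ2'| := by
  obtain ⟨ha1, hb1⟩ := ht1
  obtain ⟨ha2, hb2⟩ := ht2
  obtain ⟨ha1', hb1'⟩ := ht1'
  obtain ⟨ha2', hb2'⟩ := ht2'
  have hpi : 0 < π := pi_pos
  have hab : α1 ≤ β1 := le_trans ha1 hb1
  have hab2 : α2 ≤ β2 := le_trans ha2 hb2
  have hhpi : h < π / 2 := by nlinarith
  have hz : ∀ t : ℝ, α1 ≤ t → t ≤ β2 → t ∈ Set.Icc (0:ℝ) π :=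
    fun t hta htb => ⟨by linarith, by linarith⟩
  have hcos_mono : ∀ a b : ℝ, α1 ≤ a → a ≤ b → b ≤ β2 → cos b ≤ cos a := by
    intro a b haa hab' hbb
    exact Real.cos_le_cos_of_nonneg_of_le_pi (by linarith) (by linarith) hab'
  have hD : 2 * cos θ1 - 2 * cos θ2 ≤ 2 * cos α1 - 2 * cos β2 := by
    have e1 := hcos_mono α1 θ1 (le_refl _) ha1 (by linarith)
    have e2 := hcos_mono θ2 β2 (by linarith) hb2 (le_refl _)
    linarith
  have hd : 2 * cos β1 - 2 * cos α2 ≤ 2 * cos θ1' - 2 * cos θ2' := by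
    have e1 := hcos_mono θ1' β1 ha1' hb1' (by linarith)
    have e2 := hcos_mono α2 θ2' (by linarith) ha2' (by linarith)
    linarith
  have hdpos : 0 < 2 * cos β1 - 2 * cos α2 := by
    have := strictAntiOn_cos (hz β1 hab (by linarith)) (hz α2 (by linarith) (by linarith)) h3
    linarith
  have hnn1 : 0 ≤ 2 * cos θ1 - 2 * cos θ2 := by
    have := hcos_mono θ1 θ2 ha1 (by linarith) hb2
    linarith
  rw [abs_of_nonneg hnn1, abs_of_nonneg (by linarith : (0:ℝ) ≤ 2 * cos θ1' - 2 * cos θ2')]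
  have eD : 2 * cos α1 - 2 * cos β2 = 4 * sin ((α1 + β2) / 2) * sin ((β2 - α1) / 2) := by
    have hcc := Real.cos_sub_cos α1 β2
    have heq : (α1 - β2) / 2 = -((β2 - α1) / 2) := by ring
    rw [heq, Real.sin_neg] at hcc
    linarith [hcc]
  have ed : 2 * cos β1 - 2 * cos α2 = 4 * sin ((β1 + α2) / 2) * sin ((α2 - β1) / 2) := by
    have hcc := Real.cos_sub_cos β1 α2
    have heq : (β1 - α2) / 2 = -((α2 - β1) / 2) := by ring
    rw [heq, Real.sin_neg] at hcc
    linarith [hcc]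
  have main : 2 * cos α1 - 2 * cos β2 ≤ 40 * (2 * cos β1 - 2 * cos α2) := by
    rw [eD, ed]
    have hmd : |(α1 + β2) / 2 - (β1 + α2) / 2| ≤ h / 6 := by
      rw [abs_le] at hmid ⊢
      constructor
      · linarith [hmid.1]
      · linarith [hmid.2]
    exact core hh (by linarith) (by linarith) (by linarith) (by linarith)
      (by linarith) (by linarith) (by linarith) (by linarith) hmd
  calc 2 * cos θ1 - 2 * cos θ2 ≤ 2 * cos α1 - 2 * cos β2 := hD
    _ ≤ 40 * (2 * cos β1 - 2 * cos α2) := main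
    _ ≤ 40 * (2 * cos θ1' - 2 * cos θ2') := by linarith

lemma cross_generic (p : ℕ) (a b m E1 E2 : ℝ) (hp : 2 ≤ p)
    (ha1 : 1 ≤ a) (hb1 : 1 ≤ b) (ham : a ≤ m) (hbm : b ≤ m)
    (hE1a : E1 ≤ 0.1) (hE2a : E2 ≤ 0.1) (hE1nn : 0 ≤ E1) (hE2nn : 0 ≤ E2)
    (hE1b : ¬ p ≤ 4 → E1 ≤ (a + 0.1) / (3.92 * p))
    (hE2b : ¬ p + 1 ≤ 4 → E2 ≤ (b + 0.1) / (3.92 * ((p:ℝ) + 1))) :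
    E1 * ((p:ℝ) + 1) + E2 * (p:ℝ) ≤ 0.75 * m := by
  have hm1 : (1:ℝ) ≤ m := le_trans ha1 ham
  have hpR : (2:ℝ) ≤ (p:ℝ) := by exact_mod_cast hp
  by_cases hp4 : p ≤ 4
  · have hp4R : (p:ℝ) ≤ 4 := by exact_mod_cast hp4
    by_cases hp3 : p ≤ 3
    · have hp3R : (p:ℝ) ≤ 3 := by exact_mod_cast hp3
      have g1 : E1 * ((p:ℝ) + 1) ≤ 0.1 * ((p:ℝ) + 1) :=
        mul_le_mul_of_nonneg_right hE1a (by linarith)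
      have g2 : E2 * (p:ℝ) ≤ 0.1 * (p:ℝ) :=
        mul_le_mul_of_nonneg_right hE2a (by linarith)
      norm_num at g1 g2 ⊢
      linarith
    · have hp4' : p = 4 := by omega
      subst hp4'
      have hE2 : E2 ≤ (b + 0.1) / (3.92 * ((4:ℕ):ℝ) + 3.92) := by
        have := hE2b (by norm_num)
        convert this using 2
        push_cast; ring
      have h4 : ((4:ℕ):ℝ) = 4 := by norm_num
      rw [h4] at hE2 ⊢
      have hE2' : E2 ≤ (m + 0.1) / 19.6 := by
        calc E2 ≤ (b + 0.1) / (3.92 * 4 + 3.92) := hE2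
          _ ≤ (m + 0.1) / (3.92 * 4 + 3.92) := by gcongr <;> norm_num
          _ = (m + 0.1) / 19.6 := by norm_num
      have g1 : E1 * ((4:ℝ) + 1) ≤ 0.1 * ((4:ℝ) + 1) :=
        mul_le_mul_of_nonneg_right hE1a (by norm_num)
      have g2 : E2 * (4:ℝ) ≤ (m + 0.1) / 19.6 * 4 :=
        mul_le_mul_of_nonneg_right hE2' (by norm_num)
      norm_num at g1 g2 ⊢
      linarith
  · have hp5 : (5:ℝ) ≤ (p:ℝ) := by
      have : 5 ≤ p := by omega
      exact_mod_cast this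
    have hP0 : (0:ℝ) < (p:ℝ) := by linarith
    have hE1 := hE1b hp4
    have hE2 := hE2b (by omega)
    have key1 : (a + 0.1) / (3.92 * p) * ((p:ℝ) + 1) ≤ (m + 0.1) * 1.2 / 3.92 := by
      rw [div_mul_eq_mul_div, div_le_div_iff₀ (by positivity) (by norm_num)]
      nlinarith [mul_nonneg (sub_nonneg.2 ham) (by linarith : (0:ℝ) ≤ (p:ℝ) + 1),
        mul_nonneg (show (0:ℝ) ≤ m + 0.1 by linarith)
          (show (0:ℝ) ≤ 0.2 * (p:ℝ) - 1 by linarith)]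
    have key2 : (b + 0.1) / (3.92 * ((p:ℝ) + 1)) * (p:ℝ) ≤ (m + 0.1) / 3.92 := by
      rw [div_mul_eq_mul_div, div_le_div_iff₀ (by positivity) (by norm_num)]
      nlinarith [mul_nonneg (sub_nonneg.2 hbm) hP0.le,
        mul_nonneg (show (0:ℝ) ≤ m + 0.1 by linarith) hP0.le]
    have e1 : E1 * ((p:ℝ) + 1) ≤ (a + 0.1) / (3.92 * p) * ((p:ℝ) + 1) :=
      mul_le_mul_of_nonneg_right hE1 (by linarith)
    have e2 : E2 * (p:ℝ) ≤ (b + 0.1) / (3.92 * ((p:ℝ) + 1)) * (p:ℝ) :=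
      mul_le_mul_of_nonneg_right hE2 hP0.le
    have t1 : E1 * ((p:ℝ) + 1) ≤ (m + 0.1) * 1.2 / 3.92 := le_trans e1 key1
    have t2 : E2 * (p:ℝ) ≤ (m + 0.1) / 3.92 := le_trans e2 key2
    norm_num at t1 t2 ⊢
    linarith

lemma div_mono {x y c : ℝ} (hc : 0 < c) (h : x ≤ y) : x / c ≤ y / c := by
  rw [div_le_div_iff₀ hc hc]
  exact mul_le_mul_of_nonneg_right h hc.le

lemma ordered_real {c1 δ1 c2 δ2 h : ℝ} (hh : 0 < h)
    (ha : h ≤ c1 - δ1) (hb : c2 + δ2 ≤ π - h)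
    (hd1 : 0 ≤ δ1) (hd2 : 0 ≤ δ2) (hd1h : 6 * δ1 ≤ h) (hd2h : 6 * δ2 ≤ h)
    (hsum : δ1 + δ2 ≤ 0.75 * (c2 - c1)) (hc : c1 < c2)
    {θ1 θ2 θ1' θ2' : ℝ}
    (ht1 : θ1 ∈ Set.Icc (c1 - δ1) (c1 + δ1)) (ht2 : θ2 ∈ Set.Icc (c2 - δ2) (c2 + δ2))
    (ht1' : θ1' ∈ Set.Icc (c1 - δ1) (c1 + δ1)) (ht2' : θ2' ∈ Set.Icc (c2 - δ2) (c2 + δ2)) :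
    |2 * cos θ1 - 2 * cos θ2| ≤ 40 * |2 * cos θ1' - 2 * cos θ2'| := by
  refine key hh ha ?_ hb ?_ ?_ ht1 ht2 ht1' ht2'
  · norm_num at hsum ⊢; linarith
  · norm_num at hsum ⊢; linarith
  · rw [abs_le]
    constructor <;> [skip; skip] <;> norm_num at hsum ⊢ <;> linarith

lemma hsum_same (q l1 l2 : ℕ) (hq : 1 ≤ q) (hl12 : l1 < l2) :
    eps q l1 * π / q + eps q l2 * π / q ≤ 0.75 * ((l2:ℝ) * π / q - (l1:ℝ) * π / q) := by
  have hq0 : (0:ℝ) < q := by exact_mod_cast Nat.lt_of_lt_of_le Nat.zero_lt_one hq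
  have h12 : (l1:ℝ) + 1 ≤ l2 := by exact_mod_cast hl12
  have e : 0.75 * ((l2:ℝ) * π / q - (l1:ℝ) * π / q) = (0.75 * ((l2:ℝ) - l1) * π) / q := by
    ring
  have e2 : eps q l1 * π / q + eps q l2 * π / q = ((eps q l1 + eps q l2) * π) / q := by ring
  rw [e, e2]
  apply div_mono hq0
  have hc : (0:ℝ) ≤ 0.75 * ((l2:ℝ) - l1) - (eps q l1 + eps q l2) := by
    have g1 := eps_le q l1
    have g2 := eps_le q l2
    norm_num at g1 g2 ⊢
    linarith
  nlinarith [mul_nonneg hc pi_pos.le]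

lemma hsum_cross (p l k : ℕ) (hp : 2 ≤ p) (hl : 1 ≤ l) (hl' : l < p) (hk : 1 ≤ k)
    (hk' : k < p + 1)
    (horder : (l:ℝ) * π / p < (k:ℝ) * π / ((p:ℝ) + 1)) :
    eps p l * π / p + eps (p+1) k * π / ((p:ℝ) + 1)
      ≤ 0.75 * ((k:ℝ) * π / ((p:ℝ) + 1) - (l:ℝ) * π / p) := by
  have hpR : (2:ℝ) ≤ (p:ℝ) := by exact_mod_cast hp
  have hP0 : (0:ℝ) < p := by linarith
  have hP10 : (0:ℝ) < (p:ℝ) + 1 := by linarith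
  have hpi := pi_pos
  have hXpos : 0 < (k:ℝ) * p - (l:ℝ) * ((p:ℝ) + 1) := by
    rw [div_lt_div_iff₀ hP0 hP10] at horder
    nlinarith
  have hZpos : (0:ℤ) < (k:ℤ) * p - (l:ℤ) * ((p:ℤ) + 1) := by
    have : (0:ℝ) < (((k:ℤ) * p - (l:ℤ) * ((p:ℤ) + 1) : ℤ) : ℝ) := by push_cast; linarith
    exact_mod_cast this
  have hZ1 : (1:ℤ) ≤ (k:ℤ) * p - (l:ℤ) * ((p:ℤ) + 1) := hZpos
  have hpZ : (2:ℤ) ≤ (p:ℤ) := by exact_mod_cast hp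
  have hlZ : (1:ℤ) ≤ (l:ℤ) := by exact_mod_cast hl
  have hkl : (l:ℤ) + 1 ≤ k := by
    by_contra hcon
    push_neg at hcon
    have hkl' : (k:ℤ) ≤ l := by omega
    nlinarith [mul_le_mul_of_nonneg_right hkl' (by linarith : (0:ℤ) ≤ (p:ℤ))]
  have haZ : (p:ℤ) - l ≤ (k:ℤ) * p - l * ((p:ℤ) + 1) := by
    nlinarith [mul_nonneg (by linarith : (0:ℤ) ≤ (k:ℤ) - l - 1) (by linarith : (0:ℤ) ≤ (p:ℤ))]
  have hbZ : (p:ℤ) + 1 - k ≤ (k:ℤ) * p - l * ((p:ℤ) + 1) := by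
    nlinarith [mul_nonneg (by linarith : (0:ℤ) ≤ (k:ℤ) - l - 1) (by linarith : (0:ℤ) ≤ (p:ℤ) + 1)]
  have ha : (p:ℝ) - l ≤ (k:ℝ) * p - (l:ℝ) * ((p:ℝ) + 1) := by
    have := (Int.cast_le (R := ℝ)).mpr haZ
    push_cast at this
    linarith
  have hb : (p:ℝ) + 1 - k ≤ (k:ℝ) * p - (l:ℝ) * ((p:ℝ) + 1) := by
    have := (Int.cast_le (R := ℝ)).mpr hbZ
    push_cast at this
    linarith
  have hlP : (l:ℝ) + 1 ≤ (p:ℝ) := by exact_mod_cast hl'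
  have hkP : (k:ℝ) + 1 ≤ (p:ℝ) + 1 := by exact_mod_cast hk'
  have ha1 : (1:ℝ) ≤ (p:ℝ) - l := by linarith
  have hb1 : (1:ℝ) ≤ (p:ℝ) + 1 - k := by linarith
  have main := cross_generic p ((p:ℝ) - l) ((p:ℝ) + 1 - k)
    ((k:ℝ) * p - (l:ℝ) * ((p:ℝ) + 1)) (eps p l) (eps (p+1) k) hp ha1 hb1 ha hb
    (eps_le _ _) (eps_le _ _) (eps_nonneg _ _ hl') (eps_nonneg _ _ hk')
    (fun h4 => eps_le_right p l h4)
    (fun h4 => by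
      have := eps_le_right (p+1) k h4
      push_cast at this
      exact this)
  have eL : eps p l * π / p + eps (p+1) k * π / ((p:ℝ) + 1)
      = (eps p l * ((p:ℝ) + 1) + eps (p+1) k * p) * π / ((p:ℝ) * ((p:ℝ) + 1)) := by
    field_simp
  have eR : 0.75 * ((k:ℝ) * π / ((p:ℝ) + 1) - (l:ℝ) * π / p)
      = (0.75 * ((k:ℝ) * p - (l:ℝ) * ((p:ℝ) + 1))) * π / ((p:ℝ) * ((p:ℝ) + 1)) := by
    field_simp
  rw [eL, eR]
  exact div_mono (by positivity) (mul_le_mul_of_nonneg_right main hpi.le)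

lemma hsum_cross' (p l k : ℕ) (hp : 2 ≤ p) (hl : 1 ≤ l) (hl' : l < p) (hk : 1 ≤ k)
    (hk' : k < p + 1)
    (horder : (k:ℝ) * π / ((p:ℝ) + 1) < (l:ℝ) * π / p) :
    eps (p+1) k * π / ((p:ℝ) + 1) + eps p l * π / p
      ≤ 0.75 * ((l:ℝ) * π / p - (k:ℝ) * π / ((p:ℝ) + 1)) := by
  have hpR : (2:ℝ) ≤ (p:ℝ) := by exact_mod_cast hp
  have hP0 : (0:ℝ) < p := by linarith
  have hP10 : (0:ℝ) < (p:ℝ) + 1 := by linarith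
  have hpi := pi_pos
  have hXpos : 0 < (l:ℝ) * ((p:ℝ) + 1) - (k:ℝ) * p := by
    rw [div_lt_div_iff₀ hP10 hP0] at horder
    nlinarith
  have hZpos : (0:ℤ) < (l:ℤ) * ((p:ℤ) + 1) - (k:ℤ) * p := by
    have : (0:ℝ) < (((l:ℤ) * ((p:ℤ) + 1) - (k:ℤ) * p : ℤ) : ℝ) := by push_cast; linarith
    exact_mod_cast this
  have hZ1 : (1:ℤ) ≤ (l:ℤ) * ((p:ℤ) + 1) - (k:ℤ) * p := hZpos
  have hpZ : (2:ℤ) ≤ (p:ℤ) := by exact_mod_cast hp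
  have hkZ : (1:ℤ) ≤ (k:ℤ) := by exact_mod_cast hk
  have hlZ' : (l:ℤ) + 1 ≤ (p:ℤ) := by exact_mod_cast hl'
  have hkl : (k:ℤ) ≤ l := by
    by_contra hcon
    push_neg at hcon
    have hkl' : (l:ℤ) ≤ k - 1 := by omega
    nlinarith [mul_le_mul_of_nonneg_right hkl' (by linarith : (0:ℤ) ≤ (p:ℤ) + 1)]
  have haZ : (l:ℤ) ≤ (l:ℤ) * ((p:ℤ) + 1) - k * p := by
    nlinarith [mul_nonneg (by linarith : (0:ℤ) ≤ (l:ℤ) - k) (by linarith : (0:ℤ) ≤ (p:ℤ))]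
  have hbZ : (k:ℤ) ≤ (l:ℤ) * ((p:ℤ) + 1) - k * p := by
    nlinarith [mul_nonneg (by linarith : (0:ℤ) ≤ (l:ℤ) - k) (by linarith : (0:ℤ) ≤ (p:ℤ) + 1)]
  have ha : (l:ℝ) ≤ (l:ℝ) * ((p:ℝ) + 1) - (k:ℝ) * p := by
    have := (Int.cast_le (R := ℝ)).mpr haZ
    push_cast at this
    linarith
  have hb : (k:ℝ) ≤ (l:ℝ) * ((p:ℝ) + 1) - (k:ℝ) * p := by
    have := (Int.cast_le (R := ℝ)).mpr hbZ
    push_cast at this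
    linarith
  have ha1 : (1:ℝ) ≤ (l:ℝ) := by exact_mod_cast hl
  have hb1 : (1:ℝ) ≤ (k:ℝ) := by exact_mod_cast hk
  have main := cross_generic p ((l:ℝ)) ((k:ℝ))
    ((l:ℝ) * ((p:ℝ) + 1) - (k:ℝ) * p) (eps p l) (eps (p+1) k) hp ha1 hb1 ha hb
    (eps_le _ _) (eps_le _ _) (eps_nonneg _ _ hl') (eps_nonneg _ _ hk')
    (fun h4 => eps_le_left p l h4)
    (fun h4 => by
      have := eps_le_left (p+1) k h4
      push_cast at this
      exact this)
  have eL : eps (p+1) k * π / ((p:ℝ) + 1) + eps p l * π / p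
      = (eps p l * ((p:ℝ) + 1) + eps (p+1) k * p) * π / ((p:ℝ) * ((p:ℝ) + 1)) := by
    field_simp
    ring
  have eR : 0.75 * ((l:ℝ) * π / p - (k:ℝ) * π / ((p:ℝ) + 1))
      = (0.75 * ((l:ℝ) * ((p:ℝ) + 1) - (k:ℝ) * p)) * π / ((p:ℝ) * ((p:ℝ) + 1)) := by
    field_simp
  rw [eL, eR]
  exact div_mono (by positivity) (mul_le_mul_of_nonneg_right main hpi.le)

lemma endpoint_low (p q l : ℕ) (hp : 2 ≤ p) (hq1 : p ≤ q) (hq2 : q ≤ p + 1)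
    (hl : 1 ≤ l) (hl' : l < q) :
    0.9 * π / ((p:ℝ) + 1) ≤ (l:ℝ) * π / q - eps q l * π / q := by
  have hpR : (2:ℝ) ≤ (p:ℝ) := by exact_mod_cast hp
  have hq0 : (0:ℝ) < q := by
    have : (p:ℝ) ≤ q := by exact_mod_cast hq1
    linarith
  have hq2R : (q:ℝ) ≤ (p:ℝ) + 1 := by exact_mod_cast hq2
  have hP10 : (0:ℝ) < (p:ℝ) + 1 := by linarith
  have hlR : (1:ℝ) ≤ (l:ℝ) := by exact_mod_cast hl
  have heps := eps_le q l
  have e1 : (l:ℝ) * π / q - eps q l * π / q = ((l:ℝ) - eps q l) * π / q := by ring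
  rw [e1, div_le_div_iff₀ hP10 hq0]
  have s1 : 0.9 * (q:ℝ) ≤ ((l:ℝ) - eps q l) * ((p:ℝ) + 1) := by
    have hA : (0:ℝ) ≤ (l:ℝ) - eps q l - 0.9 := by norm_num at heps ⊢; linarith
    nlinarith [mul_nonneg hA hP10.le]
  nlinarith [mul_le_mul_of_nonneg_right s1 pi_pos.le]

lemma endpoint_high (p q l : ℕ) (hp : 2 ≤ p) (hq1 : p ≤ q) (hq2 : q ≤ p + 1)
    (hl : 1 ≤ l) (hl' : l < q) :
    (l:ℝ) * π / q + eps q l * π / q ≤ π - 0.9 * π / ((p:ℝ) + 1) := by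
  have hpR : (2:ℝ) ≤ (p:ℝ) := by exact_mod_cast hp
  have hq0 : (0:ℝ) < q := by
    have : (p:ℝ) ≤ q := by exact_mod_cast hq1
    linarith
  have hq2R : (q:ℝ) ≤ (p:ℝ) + 1 := by exact_mod_cast hq2
  have hP10 : (0:ℝ) < (p:ℝ) + 1 := by linarith
  have hlR : (l:ℝ) + 1 ≤ (q:ℝ) := by exact_mod_cast hl'
  have heps := eps_le q l
  have e0 : π - 0.9 * π / ((p:ℝ) + 1) = ((p:ℝ) + 1 - 0.9) * π / ((p:ℝ) + 1) := by
    field_simp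
  have e1 : (l:ℝ) * π / q + eps q l * π / q = ((l:ℝ) + eps q l) * π / q := by ring
  rw [e0, e1, div_le_div_iff₀ hq0 hP10]
  have s1 : ((l:ℝ) + eps q l) * ((p:ℝ) + 1) ≤ ((p:ℝ) + 1 - 0.9) * (q:ℝ) := by
    have hA : (0:ℝ) ≤ (q:ℝ) - 0.9 - (l:ℝ) - eps q l := by norm_num at heps ⊢; linarith
    nlinarith [mul_nonneg hA hP10.le]
  nlinarith [mul_le_mul_of_nonneg_right s1 pi_pos.le]

lemma width_small (p q l : ℕ) (hp : 2 ≤ p) (hq1 : p ≤ q) (hq2 : q ≤ p + 1) (hl' : l < q) :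
    6 * (eps q l * π / q) ≤ 0.9 * π / ((p:ℝ) + 1) := by
  have hpR : (2:ℝ) ≤ (p:ℝ) := by exact_mod_cast hp
  have hqpR : (p:ℝ) ≤ (q:ℝ) := by exact_mod_cast hq1
  have hq0 : (0:ℝ) < q := by linarith
  have hP10 : (0:ℝ) < (p:ℝ) + 1 := by linarith
  have heps := eps_le q l
  have hepsnn := eps_nonneg q l hl'
  have e1 : 6 * (eps q l * π / q) = (6 * eps q l) * π / q := by ring
  rw [e1, div_le_div_iff₀ hq0 hP10]
  have s1 : (6 * eps q l) * ((p:ℝ) + 1) ≤ 0.9 * (q:ℝ) := by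
    have hA : (0:ℝ) ≤ 0.1 - eps q l := by norm_num at heps ⊢; linarith
    nlinarith [mul_nonneg hA hP10.le]
  nlinarith [mul_le_mul_of_nonneg_right s1 pi_pos.le]

lemma lt_of_center_lt (q l1 l2 : ℕ) (hq0 : (0:ℝ) < q)
    (h : (l1:ℝ) * π / q < (l2:ℝ) * π / q) : l1 < l2 := by
  by_contra hcon
  push_neg at hcon
  have hc : (l2:ℝ) ≤ l1 := by exact_mod_cast hcon
  have := div_mono hq0 (mul_le_mul_of_nonneg_right hc pi_pos.le)
  linarith

lemma ordered (p q1 l1 q2 l2 : ℕ) (hp : 2 ≤ p)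
    (hq1 : q1 = p ∨ q1 = p + 1) (hq2 : q2 = p ∨ q2 = p + 1)
    (hl1 : 1 ≤ l1) (hl1' : l1 < q1) (hl2 : 1 ≤ l2) (hl2' : l2 < q2)
    (horder : (l1:ℝ) * π / q1 < (l2:ℝ) * π / q2)
    {θ1 θ2 θ1' θ2' : ℝ}
    (ht1 : θ1 ∈ Set.Icc ((l1:ℝ) * π / q1 - eps q1 l1 * π / q1)
      ((l1:ℝ) * π / q1 + eps q1 l1 * π / q1))
    (ht2 : θ2 ∈ Set.Icc ((l2:ℝ) * π / q2 - eps q2 l2 * π / q2)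
      ((l2:ℝ) * π / q2 + eps q2 l2 * π / q2))
    (ht1' : θ1' ∈ Set.Icc ((l1:ℝ) * π / q1 - eps q1 l1 * π / q1)
      ((l1:ℝ) * π / q1 + eps q1 l1 * π / q1))
    (ht2' : θ2' ∈ Set.Icc ((l2:ℝ) * π / q2 - eps q2 l2 * π / q2)
      ((l2:ℝ) * π / q2 + eps q2 l2 * π / q2)) :
    |2 * cos θ1 - 2 * cos θ2| ≤ 40 * |2 * cos θ1' - 2 * cos θ2'| := by
  have hq1a : p ≤ q1 := by rcases hq1 with rfl | rfl <;> omega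
  have hq1b : q1 ≤ p + 1 := by rcases hq1 with rfl | rfl <;> omega
  have hq2a : p ≤ q2 := by rcases hq2 with rfl | rfl <;> omega
  have hq2b : q2 ≤ p + 1 := by rcases hq2 with rfl | rfl <;> omega
  have hq10 : (0:ℝ) < q1 := by
    have : (2:ℝ) ≤ (q1:ℝ) := by exact_mod_cast le_trans hp hq1a
    linarith
  have hq20 : (0:ℝ) < q2 := by
    have : (2:ℝ) ≤ (q2:ℝ) := by exact_mod_cast le_trans hp hq2a
    linarith
  have hh : (0:ℝ) < 0.9 * π / ((p:ℝ) + 1) := by positivity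
  have hd1 : (0:ℝ) ≤ eps q1 l1 * π / q1 :=
    div_nonneg (mul_nonneg (eps_nonneg _ _ hl1') pi_pos.le) hq10.le
  have hd2 : (0:ℝ) ≤ eps q2 l2 * π / q2 :=
    div_nonneg (mul_nonneg (eps_nonneg _ _ hl2') pi_pos.le) hq20.le
  have hsum : eps q1 l1 * π / q1 + eps q2 l2 * π / q2
      ≤ 0.75 * ((l2:ℝ) * π / q2 - (l1:ℝ) * π / q1) := by
    have hcast : ((p + 1 : ℕ):ℝ) = (p:ℝ) + 1 := by push_cast; ring
    rcases hq1 with h1 | h1 <;> rcases hq2 with h2 | h2 <;>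
      rw [h1, h2] at horder ⊢
    · exact hsum_same p l1 l2 (by omega) (lt_of_center_lt p l1 l2 (by rw [← h1]; exact hq10) horder)
    · rw [hcast] at horder ⊢
      exact hsum_cross p l1 l2 hp hl1 (by omega) hl2 (by omega) horder
    · rw [hcast] at horder ⊢
      exact hsum_cross' p l2 l1 hp hl2 (by omega) hl1 (by omega) horder
    · exact hsum_same (p+1) l1 l2 (by omega) (lt_of_center_lt (p+1) l1 l2 (by rw [← h1]; exact hq10) horder)
  exact ordered_real hh
    (endpoint_low p q1 l1 hp hq1a hq1b hl1 hl1')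
    (endpoint_high p q2 l2 hp hq2a hq2b hl2 hl2')
    hd1 hd2
    (width_small p q1 l1 hp hq1a hq1b hl1')
    (width_small p q2 l2 hp hq2a hq2b hl2')
    hsum horder ht1 ht2 ht1' ht2'

/-- `J_{p,l} = {2 cos θ : |θ − lπ/p| ≤ ε_{p,l} π/p}`. -/
noncomputable def Jset (p l : ℕ) : Set ℝ :=
  (fun θ : ℝ => 2 * Real.cos θ) ''
    Set.Icc ((l : ℝ) * π / p - eps p l * π / p) ((l : ℝ) * π / p + eps p l * π / p)

/-- The family `𝒥_p = {J_{p,l} : 1 ≤ l < p} ∪ {J_{p+1,l} : 1 ≤ l < p+1}`. -/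
noncomputable def Jfamily (p : ℕ) : Set (Set ℝ) :=
  {S | (∃ l, 1 ≤ l ∧ l < p ∧ S = Jset p l) ∨ (∃ l, 1 ≤ l ∧ l < p + 1 ∧ S = Jset (p + 1) l)}

lemma both (p q1 l1 q2 l2 : ℕ) (hp : 2 ≤ p)
    (hq1 : q1 = p ∨ q1 = p + 1) (hq2 : q2 = p ∨ q2 = p + 1)
    (hl1 : 1 ≤ l1) (hl1' : l1 < q1) (hl2 : 1 ≤ l2) (hl2' : l2 < q2)
    (hne : ¬(q1 = q2 ∧ l1 = l2))
    {θ1 θ2 θ1' θ2' : ℝ}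
    (ht1 : θ1 ∈ Set.Icc ((l1:ℝ) * π / q1 - eps q1 l1 * π / q1)
      ((l1:ℝ) * π / q1 + eps q1 l1 * π / q1))
    (ht2 : θ2 ∈ Set.Icc ((l2:ℝ) * π / q2 - eps q2 l2 * π / q2)
      ((l2:ℝ) * π / q2 + eps q2 l2 * π / q2))
    (ht1' : θ1' ∈ Set.Icc ((l1:ℝ) * π / q1 - eps q1 l1 * π / q1)
      ((l1:ℝ) * π / q1 + eps q1 l1 * π / q1))
    (ht2' : θ2' ∈ Set.Icc ((l2:ℝ) * π / q2 - eps q2 l2 * π / q2)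
      ((l2:ℝ) * π / q2 + eps q2 l2 * π / q2)) :
    |2 * cos θ1 - 2 * cos θ2| ≤ 40 * |2 * cos θ1' - 2 * cos θ2'| := by
  have hq10 : (0:ℝ) < q1 := by
    have : 2 ≤ q1 := by rcases hq1 with rfl | rfl <;> omega
    have : (2:ℝ) ≤ (q1:ℝ) := by exact_mod_cast this
    linarith
  have hq20 : (0:ℝ) < q2 := by
    have : 2 ≤ q2 := by rcases hq2 with rfl | rfl <;> omega
    have : (2:ℝ) ≤ (q2:ℝ) := by exact_mod_cast this
    linarith
  rcases lt_trichotomy ((l1:ℝ) * π / q1) ((l2:ℝ) * π / q2) with hlt | heq | hgt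
  · exact ordered p q1 l1 q2 l2 hp hq1 hq2 hl1 hl1' hl2 hl2' hlt ht1 ht2 ht1' ht2'
  · exfalso
    rw [div_eq_div_iff hq10.ne' hq20.ne'] at heq
    have heq2 : ((l1 * q2 : ℕ):ℝ) * π = ((l2 * q1 : ℕ):ℝ) * π := by push_cast; linarith
    have heqn : l1 * q2 = l2 * q1 := by
      have := mul_right_cancel₀ pi_ne_zero heq2
      exact_mod_cast this
    rcases hq1 with rfl | rfl <;> rcases hq2 with rfl | rfl
    · exact hne ⟨rfl, Nat.eq_of_mul_eq_mul_right (by omega) heqn⟩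
    · -- l1 * (p+1) = l2 * p, so p ∣ l1, absurd
      have hdvd : q1 ∣ l1 * (q1 + 1) := ⟨l2, by rw [heqn, Nat.mul_comm]⟩
      have hcop : Nat.Coprime q1 (q1 + 1) := Nat.coprime_self_add_right.mpr (Nat.coprime_one_right _)
      have : q1 ∣ l1 := hcop.dvd_of_dvd_mul_right hdvd
      have := Nat.le_of_dvd (by omega) this
      omega
    · have hdvd : q2 ∣ l2 * (q2 + 1) := ⟨l1, by rw [← heqn, Nat.mul_comm]⟩
      have hcop : Nat.Coprime q2 (q2 + 1) := Nat.coprime_self_add_right.mpr (Nat.coprime_one_right _)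
      have : q2 ∣ l2 := hcop.dvd_of_dvd_mul_right hdvd
      have := Nat.le_of_dvd (by omega) this
      omega
    · exact hne ⟨rfl, Nat.eq_of_mul_eq_mul_right (by omega) heqn⟩
  · have := ordered p q2 l2 q1 l1 hp hq2 hq1 hl2 hl2' hl1 hl1' hgt ht2 ht1 ht2' ht1'
    rw [abs_sub_comm (2 * cos θ2) (2 * cos θ1), abs_sub_comm (2 * cos θ2') (2 * cos θ1')] at this
    exact this

/-- For `p ≥ 2` and distinct `I, J ∈ 𝒥_p`, the ratio `D(I,J)/d(I,J)` of the maximal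
to minimal distance between their points is at most `40`. -/
theorem Jfamily_ratio (p : ℕ) (hp : 2 ≤ p) :
    ∀ S ∈ Jfamily p, ∀ T ∈ Jfamily p, S ≠ T →
      ∀ x ∈ S, ∀ y ∈ T, ∀ x' ∈ S, ∀ y' ∈ T, |x - y| ≤ 40 * |x' - y'| := by

  intro S hS T hT hne x hx y hy x' hx' y' hy'
  simp only [Jfamily, Set.mem_setOf_eq] at hS hT
  have hS' : ∃ q1 l1, (q1 = p ∨ q1 = p + 1) ∧ 1 ≤ l1 ∧ l1 < q1 ∧ S = Jset q1 l1 := by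
    rcases hS with ⟨l1, h1, h2, h3⟩ | ⟨l1, h1, h2, h3⟩
    · exact ⟨p, l1, Or.inl rfl, h1, h2, h3⟩
    · exact ⟨p + 1, l1, Or.inr rfl, h1, h2, h3⟩
  have hT' : ∃ q2 l2, (q2 = p ∨ q2 = p + 1) ∧ 1 ≤ l2 ∧ l2 < q2 ∧ T = Jset q2 l2 := by
    rcases hT with ⟨l2, h1, h2, h3⟩ | ⟨l2, h1, h2, h3⟩
    · exact ⟨p, l2, Or.inl rfl, h1, h2, h3⟩
    · exact ⟨p + 1, l2, Or.inr rfl, h1, h2, h3⟩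
  obtain ⟨q1, l1, hq1, hl1, hl1', rfl⟩ := hS'
  obtain ⟨q2, l2, hq2, hl2, hl2', rfl⟩ := hT'
  obtain ⟨θ1, hθ1, rfl⟩ := hx
  obtain ⟨θ2, hθ2, rfl⟩ := hy
  obtain ⟨θ1', hθ1', rfl⟩ := hx'
  obtain ⟨θ2', hθ2', rfl⟩ := hy'
  have hne' : ¬(q1 = q2 ∧ l1 = l2) := by
    rintro ⟨rfl, rfl⟩
    exact hne rfl
  exact both p q1 l1 q2 l2 hp hq1 hq2 hl1 hl1' hl2 hl2' hne' hθ1 hθ2 hθ1' hθ2'
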